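/- In the coin-tossing game, let E be the event that ∑_n x_n < ∞. Then P̲(E) = 0. Concretely: for any Skeptic strategy with initial capital K_0 < 1 keeping the capital nonnegative, if Forecaster announces p_n with ∏_n p_n > K_0 and Reality announces x_n = 1 for all n, then sup_n K_n ≤ K_0 / ∏_{n=1}^∞ p_n < 1. -/

import Mathlib

open Filter Finset

/-- Capital process in the coin-tossing game with initial capital `a`. -/
def cap (a : ℝ) (p M x : ℕ → ℝ) : ℕ → ℝ
  | 0 => a
  | n + 1 => cap a p M x n + M n * (x n - p n)

/-- Forecaster's moves are probabilities in `[0,1]`. -/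
def ValidP (p : ℕ → ℝ) : Prop := ∀ n, p n ∈ Set.Icc (0 : ℝ) 1

/-- Reality's moves are in `{0,1}`. -/
def ValidX (x : ℕ → ℝ) : Prop := ∀ n, x n = 0 ∨ x n = 1

/-- A Skeptic strategy reads Forecaster's moves up to round `n` and Reality's
moves before round `n`. -/
def SAdapted (S : (ℕ → ℝ) → (ℕ → ℝ) → ℕ → ℝ) : Prop :=
  ∀ p p' x x' : ℕ → ℝ, ∀ n, (∀ k ≤ n, p k = p' k) → (∀ k < n, x k = x' k) →
    S p x n = S p' x' n

/-- A Reality strategy reads Forecaster's and Skeptic's moves up to round `n`. -/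
def RAdapted (R : (ℕ → ℝ) → (ℕ → ℝ) → ℕ → ℝ) : Prop :=
  ∀ p p' M M' : ℕ → ℝ, ∀ n, (∀ k ≤ n, p k = p' k) → (∀ k ≤ n, M k = M' k) →
    R p M n = R p' M' n

/-- Upper probability of an event `E` (a set of paths `(p, x)`). -/
noncomputable def UpperP (E : (ℕ → ℝ) → (ℕ → ℝ) → Prop) : ℝ :=
  sInf {a | ∃ S, SAdapted S ∧ ∀ p x, ValidP p → ValidX x →
    (∀ n, 0 ≤ cap a p (S p x) x n) ∧
    (E p x → ∀ ε : ℝ, 0 < ε → ∃ n, 1 - ε < cap a p (S p x) x n)}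

/-- Lower probability. -/
noncomputable def LowerP (E : (ℕ → ℝ) → (ℕ → ℝ) → Prop) : ℝ :=
  1 - UpperP (fun p x => ¬ E p x)

/-- The set of initial capitals `a` for which some Reality strategy guarantees
the event and keeps the capital at most 1, against every Forecaster and every
Skeptic keeping the capital nonnegative. -/
def QSet (E : (ℕ → ℝ) → (ℕ → ℝ) → Prop) : Set ℝ :=
  {a | ∃ R, RAdapted R ∧ ∀ p M : ℕ → ℝ, ValidP p →
    ValidX (R p M) ∧
    ((∀ n, 0 ≤ cap a p M (R p M) n) →
      (E p (R p M) ∧ ∀ n, cap a p M (R p M) n ≤ 1))}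

noncomputable def UpperQ (E : (ℕ → ℝ) → (ℕ → ℝ) → Prop) : ℝ := sSup (QSet E)

noncomputable def LowerQ (E : (ℕ → ℝ) → (ℕ → ℝ) → Prop) : ℝ :=
  1 - UpperQ (fun p x => ¬ E p x)

/-!
Against the all-ones path, Reality threatens at every round `n` to deviate to `x n = 0`. If
Skeptic holds capital `K` and stakes `M`, that deviation leaves `K - M p n`, which collateral
duty keeps nonnegative; hence `M ≤ K / p n`, and the ones-path capital after the round is
`K + M (1 - p n) ≤ K / p n`. Iterating, the capital is at most `K₀ / ∏ p`, which stays below `1`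
when `K₀ < ∏ p`. In particular Forecaster `p ≡ 1` freezes Skeptic's capital on the
non-summable path `x ≡ 1`, so `¬ Summable x` has upper probability `1`.
-/

lemma cap_succ (a : ℝ) (p M x : ℕ → ℝ) (n : ℕ) :
    cap a p M x (n + 1) = cap a p M x n + M n * (x n - p n) := rfl

lemma cap_eq_init {a : ℝ} {p M x : ℕ → ℝ} (h : ∀ k, M k * (x k - p k) = 0) (n : ℕ) :
    cap a p M x n = a := by
  induction n with
  | zero => rfl
  | succ n ih => rw [cap_succ, ih, h, add_zero]

lemma cap_congr {a : ℝ} {p M M' x x' : ℕ → ℝ} {n : ℕ}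
    (hM : ∀ k < n, M k = M' k) (hx : ∀ k < n, x k = x' k) :
    cap a p M x n = cap a p M' x' n := by
  induction n with
  | zero => rfl
  | succ n ih =>
    rw [cap_succ, cap_succ, hM n n.lt_succ_self, hx n n.lt_succ_self,
      ih (fun k hk => hM k (hk.trans n.lt_succ_self)) (fun k hk => hx k (hk.trans n.lt_succ_self))]

lemma SAdapted.cap_congr {S : (ℕ → ℝ) → (ℕ → ℝ) → ℕ → ℝ} (hS : SAdapted S) (a : ℝ)
    (p : ℕ → ℝ) {x x' : ℕ → ℝ} {n : ℕ} (hx : ∀ k < n, x k = x' k) :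
    cap a p (S p x) x n = cap a p (S p x') x' n :=
  _root_.cap_congr (fun k hk => hS p p x x' k (fun _ _ => rfl) fun j hj => hx j (hj.trans hk)) hx

lemma ValidP.antitone_prod_range {p : ℕ → ℝ} (hp : ValidP p) :
    Antitone fun n => ∏ k ∈ range n, p k :=
  antitone_nat_of_succ_le fun n => by
    rw [prod_range_succ]
    exact mul_le_of_le_one_right (prod_nonneg fun k _ => (hp k).1) (hp n).2

lemma ValidP.pos_of_tendsto_prod_range {p : ℕ → ℝ} {P : ℝ} (hp : ValidP p) (hP : 0 < P)
    (hprod : Tendsto (fun n => ∏ k ∈ range n, p k) atTop (nhds P)) (n : ℕ) : 0 < p n := by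
  have hpos : 0 < ∏ k ∈ range (n + 1), p k :=
    hP.trans_le (hp.antitone_prod_range.le_of_tendsto hprod (n + 1))
  rw [prod_range_succ] at hpos
  exact pos_of_mul_pos_right hpos (prod_nonneg fun k _ => (hp k).1)

lemma add_mul_one_sub_le_div {K m q : ℝ} (hq : 0 < q) (hq1 : q ≤ 1) (h : 0 ≤ K - m * q) :
    K + m * (1 - q) ≤ K / q := by
  rw [le_div_iff₀ hq]
  nlinarith [mul_nonneg h (sub_nonneg.2 hq1)]

lemma cap_ones_le_div_prod_range {a : ℝ} {p : ℕ → ℝ} {S : (ℕ → ℝ) → (ℕ → ℝ) → ℕ → ℝ}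
    (hS : SAdapted S) (hp : ValidP p) (hpos : ∀ n, 0 < p n)
    (hnn : ∀ x, ValidX x → ∀ n, 0 ≤ cap a p (S p x) x n) (n : ℕ) :
    cap a p (S p (fun _ => 1)) (fun _ => 1) n ≤ a / ∏ k ∈ range n, p k := by
  induction n with
  | zero => simp [cap]
  | succ n ih =>
    set K := cap a p (S p (fun _ => 1)) (fun _ => 1) n
    set M := S p (fun _ => 1) n
    let deviation : ℕ → ℝ := fun k => if k < n then 1 else 0
    have hvalid : ValidX deviation := fun k => by
      by_cases hk : k < n <;> simp [deviation, hk]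
    have hK : cap a p (S p deviation) deviation n = K :=
      hS.cap_congr a p fun k hk => if_pos hk
    have hM : S p deviation n = M := hS p p _ _ n (fun _ _ => rfl) fun k hk => if_pos hk
    have hcollateral : 0 ≤ K - M * p n := by
      have h := hnn deviation hvalid (n + 1)
      rwa [cap_succ, hK, hM, show deviation n = 0 from if_neg n.lt_irrefl, zero_sub, mul_neg,
        ← sub_eq_add_neg] at h
    calc cap a p (S p (fun _ => 1)) (fun _ => 1) (n + 1) = K + M * (1 - p n) := rfl
      _ ≤ K / p n := add_mul_one_sub_le_div (hpos n) (hp n).2 hcollateral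
      _ ≤ a / (∏ k ∈ range n, p k) / p n := div_le_div_of_nonneg_right ih (hpos n).le
      _ = a / ∏ k ∈ range (n + 1), p k := by rw [prod_range_succ, div_div]

lemma cap_ones_le_div {a P : ℝ} {p : ℕ → ℝ} {S : (ℕ → ℝ) → (ℕ → ℝ) → ℕ → ℝ}
    (hS : SAdapted S) (hp : ValidP p) (hP : 0 < P)
    (hprod : Tendsto (fun n => ∏ k ∈ range n, p k) atTop (nhds P))
    (hnn : ∀ x, ValidX x → ∀ n, 0 ≤ cap a p (S p x) x n) (n : ℕ) :
    cap a p (S p (fun _ => 1)) (fun _ => 1) n ≤ a / P := by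
  have ha : 0 ≤ a := hnn (fun _ => 1) (fun _ => Or.inr rfl) 0
  exact (cap_ones_le_div_prod_range hS hp (hp.pos_of_tendsto_prod_range hP hprod) hnn n).trans
    (div_le_div_of_nonneg_left ha hP (hp.antitone_prod_range.le_of_tendsto hprod n))

lemma upperP_not_summable : UpperP (fun _ x => ¬ Summable x) = 1 := by
  have hones : ¬ Summable (fun _ : ℕ => (1 : ℝ)) := by
    rw [summable_const_iff]
    exact one_ne_zero
  refine IsLeast.csInf_eq ⟨⟨fun _ _ _ => 0, fun _ _ _ _ _ _ _ => rfl, fun p x _ _ => ?_⟩, ?_⟩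
  · have hK : ∀ n, cap 1 p (fun _ => 0) x n = 1 := cap_eq_init fun k => zero_mul _
    exact ⟨fun n => (hK n).symm ▸ zero_le_one, fun _ ε hε => ⟨0, by linarith [hK 0]⟩⟩
  · rintro b ⟨S, -, hb⟩
    by_contra! hb1
    have hfrozen : ∀ n, cap b (fun _ => 1) (S (fun _ => 1) (fun _ => 1)) (fun _ => 1) n = b :=
      cap_eq_init fun k => by rw [sub_self, mul_zero]
    obtain ⟨n, hn⟩ := (hb (fun _ => 1) (fun _ => 1) (fun _ => ⟨zero_le_one, le_rfl⟩)
      (fun _ => Or.inr rfl)).2 hones (1 - b) (by linarith)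
    linarith [hfrozen n]

/-- In the coin-tossing game, the event `E` that `∑ x n < ∞` has lower
probability 0.  Concretely, for any Skeptic strategy with initial capital
`a < 1` keeping the capital nonnegative, if Forecaster plays `p` whose infinite
product converges to `P > a` and Reality plays `x n = 1` for all `n`, then the
capital never exceeds `a / P < 1`. -/
theorem stmt_14 :
    LowerP (fun _ x => Summable x) = 0 ∧
    ∀ a : ℝ, a < 1 →
      ∀ S, SAdapted S →
        (∀ p x, ValidP p → ValidX x → ∀ n, 0 ≤ cap a p (S p x) x n) →
        ∀ p : ℕ → ℝ, ∀ P : ℝ, ValidP p → 0 < P → a < P →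
          Tendsto (fun n => ∏ k ∈ Finset.range n, p k) atTop (nhds P) →
          (∀ n, cap a p (S p (fun _ => 1)) (fun _ => 1) n ≤ a / P) ∧
            a / P < 1 := by
  refine ⟨by rw [LowerP, upperP_not_summable, sub_self], ?_⟩
  intro a _ S hS hnn p P hp hP haP hprod
  exact ⟨cap_ones_le_div hS hp hP hprod fun x hx => hnn p x hp hx, (div_lt_one hP).2 haP⟩
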